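/- Let T be a string over an alphabet Σ whose last two characters are distinct and each occurs exactly once in T (the two delimiter characters), and let T₁ = evens T and T₂ = odds T be its 2-interleaved subsequences. Then for every node-string W of T there exist node-strings W₁ of the pair (T₁, T₂) and W₂ of the pair (T₁, T₂) such that, setting W′ = interleave₂ W₁ W₂: W′ is a prefix of W, and every node-string V of T that is a prefix of W with V ≠ W satisfies |V| < |W′|. (This is the paper's Lemma 4 for k = 2, to which the general case reduces without loss of generality: for each node ω of the original suffix tree there exists a pair of nodes ω₁, ω₂ of the 2-interleaved suffix tree such that deinterleaving the longest substrings which ω₁ and ω₂ correspond to results in one of the substrings which ω corresponds to.) -/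

import Mathlib

/-- Deinterleave two subsequences: take one character alternately from each, stopping
once the shorter subsequence is exhausted (paper's Definition 2 with k = 2). -/
def interleave₂ {σ : Type*} : List σ → List σ → List σ
  | [], _ => []
  | a :: _, [] => [a]
  | a :: l₁, b :: l₂ => a :: b :: interleave₂ l₁ l₂

mutual
  /-- The characters of a string at positions 1, 3, 5, ... (1-indexed):
  the first 2-interleaved subsequence. -/
  def evens {σ : Type*} : List σ → List σ
    | [] => []
    | a :: l => a :: odds l
  /-- The characters of a string at positions 2, 4, 6, ... (1-indexed):
  the second 2-interleaved subsequence. -/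
  def odds {σ : Type*} : List σ → List σ
    | [] => []
    | _ :: l => evens l
end

/-- A string `W` is right-branching in `T` if there are two distinct characters `c₁ ≠ c₂`
such that both `W ++ [c₁]` and `W ++ [c₂]` are substrings (infixes) of `T`. -/
def RightBranching {σ : Type*} (T W : List σ) : Prop :=
  ∃ c₁ c₂ : σ, c₁ ≠ c₂ ∧ (W ++ [c₁]) <:+: T ∧ (W ++ [c₂]) <:+: T

/-- `W` corresponds to an explicit node of the suffix tree of `T`:
`W` is empty, or a suffix of `T`, or a substring of `T` that is right-branching in `T`. -/
def NodeString {σ : Type*} (T W : List σ) : Prop :=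
  W = [] ∨ W <:+ T ∨ (W <:+: T ∧ RightBranching T W)

/-- `W` corresponds to a node of the 2-interleaved suffix tree built from the two
strings `T₁`, `T₂`: `W` is empty, or a suffix of `T₁` or of `T₂`, or there are two
distinct characters `c₁ ≠ c₂` such that each of `W ++ [c₁]` and `W ++ [c₂]` is a
substring of `T₁` or of `T₂`. -/
def NodeString₂ {σ : Type*} (T₁ T₂ W : List σ) : Prop :=
  W = [] ∨ W <:+ T₁ ∨ W <:+ T₂ ∨
    ∃ c₁ c₂ : σ, c₁ ≠ c₂ ∧
      ((W ++ [c₁]) <:+: T₁ ∨ (W ++ [c₁]) <:+: T₂) ∧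
      ((W ++ [c₂]) <:+: T₁ ∨ (W ++ [c₂]) <:+: T₂)

/-! Every node-string `W` of `T` is itself `interleave₂ W₁ W₂` for node-strings `W₁`, `W₂` of
`(evens T, odds T)`, so `W′ = W` works. If `W` is a suffix of `T`, then `evens W` and `odds W`
are suffixes of `evens T` or `odds T`. If `W` is right-branching, with `W ++ [c]` and `W ++ [d]`
substrings of `T`, the next character `c` or `d` lands on the subsequence of `W` selected by the
parity of `|W|`, which is therefore right-branching in the pair; the other subsequence is
extended to a suffix of `evens T` or `odds T` by following an occurrence of `W` to the end of
`T`, and since `interleave₂` stops as soon as one argument runs out, the extension does not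
change the interleaving. -/

open List

section

variable {σ : Type*}

theorem evens_odds_append (l r : List σ) :
    (Even l.length → evens (l ++ r) = evens l ++ evens r ∧ odds (l ++ r) = odds l ++ odds r) ∧
    (¬Even l.length → evens (l ++ r) = evens l ++ odds r ∧ odds (l ++ r) = odds l ++ evens r) := by
  induction l with
  | nil => simp [evens, odds]
  | cons a l ih =>
    simp only [length_cons, Nat.even_add_one, not_not, cons_append, evens, odds]
    exact ⟨fun h => by simp [ih.2 h], fun h => by simp [ih.1 h]⟩

theorem evens_append_of_even {l : List σ} (h : Even l.length) (r : List σ) :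
    evens (l ++ r) = evens l ++ evens r :=
  ((evens_odds_append l r).1 h).1

theorem odds_append_of_even {l : List σ} (h : Even l.length) (r : List σ) :
    odds (l ++ r) = odds l ++ odds r :=
  ((evens_odds_append l r).1 h).2

theorem evens_append_of_not_even {l : List σ} (h : ¬Even l.length) (r : List σ) :
    evens (l ++ r) = evens l ++ odds r :=
  ((evens_odds_append l r).2 h).1

theorem odds_append_of_not_even {l : List σ} (h : ¬Even l.length) (r : List σ) :
    odds (l ++ r) = odds l ++ evens r :=
  ((evens_odds_append l r).2 h).2

theorem evens_prefix_evens_append (l r : List σ) : evens l <+: evens (l ++ r) := by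
  by_cases h : Even l.length
  · exact ⟨_, (evens_append_of_even h r).symm⟩
  · exact ⟨_, (evens_append_of_not_even h r).symm⟩

theorem odds_prefix_odds_append (l r : List σ) : odds l <+: odds (l ++ r) := by
  by_cases h : Even l.length
  · exact ⟨_, (odds_append_of_even h r).symm⟩
  · exact ⟨_, (odds_append_of_not_even h r).symm⟩

theorem List.IsSuffix.evens_or_odds {Y X T : List σ} (hY : Y <:+ evens X ∨ Y <:+ odds X)
    (hX : X <:+ T) : Y <:+ evens T ∨ Y <:+ odds T := by
  obtain ⟨A, rfl⟩ := hX
  induction A with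
  | nil => exact hY
  | cons a A ih =>
    simp only [cons_append, evens, odds]
    exact ih.symm.imp_left (·.trans (suffix_cons a _))

theorem evens_suffix_or_of_suffix {X T : List σ} (h : X <:+ T) :
    evens X <:+ evens T ∨ evens X <:+ odds T :=
  IsSuffix.evens_or_odds (.inl (suffix_refl _)) h

theorem odds_suffix_or_of_suffix {X T : List σ} (h : X <:+ T) :
    odds X <:+ evens T ∨ odds X <:+ odds T :=
  IsSuffix.evens_or_odds (.inr (suffix_refl _)) h

theorem evens_infix_or_of_infix {X T : List σ} (h : X <:+: T) :
    evens X <:+: evens T ∨ evens X <:+: odds T := by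
  obtain ⟨A, B, rfl⟩ := h
  have hXB : X ++ B <:+ A ++ X ++ B := by simp
  have hpre := (evens_prefix_evens_append X B).isInfix
  exact (evens_suffix_or_of_suffix hXB).imp (hpre.trans ·.isInfix) (hpre.trans ·.isInfix)

theorem odds_infix_or_of_infix {X T : List σ} (h : X <:+: T) :
    odds X <:+: evens T ∨ odds X <:+: odds T := by
  obtain ⟨A, B, rfl⟩ := h
  have hXB : X ++ B <:+ A ++ X ++ B := by simp
  have hpre := (odds_prefix_odds_append X B).isInfix
  exact (odds_suffix_or_of_suffix hXB).imp (hpre.trans ·.isInfix) (hpre.trans ·.isInfix)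

theorem interleave₂_evens_odds_append_of_even :
    ∀ {l : List σ}, Even l.length → ∀ r : List σ, interleave₂ (evens l) (odds l ++ r) = l
  | [], _, _ => rfl
  | [_], h, _ => absurd h (by simp)
  | a :: b :: l, h, r => by
    simp only [length_cons, Nat.even_add_one, not_not] at h
    simp only [evens, odds, cons_append, interleave₂, interleave₂_evens_odds_append_of_even h r]

theorem interleave₂_evens_append_odds_of_not_even :
    ∀ {l : List σ}, ¬Even l.length → ∀ r : List σ, interleave₂ (evens l ++ r) (odds l) = l
  | [], h, _ => absurd (by simp) h
  | [_], _, _ => rfl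
  | a :: b :: l, h, r => by
    simp only [length_cons, Nat.even_add_one, not_not] at h
    simp only [evens, odds, cons_append, interleave₂,
      interleave₂_evens_append_odds_of_not_even h r]

theorem interleave₂_evens_odds (l : List σ) : interleave₂ (evens l) (odds l) = l := by
  by_cases h : Even l.length
  · simpa using interleave₂_evens_odds_append_of_even h []
  · simpa using interleave₂_evens_append_odds_of_not_even h []

end

section

variable {σ : Type*} {T W : List σ}

theorem nodeString₂_of_suffix {Y : List σ} (h : Y <:+ evens T ∨ Y <:+ odds T) :
    NodeString₂ (evens T) (odds T) Y :=
  h.elim (.inr ∘ .inl) (.inr ∘ .inr ∘ .inl)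

theorem nodeString₂_evens_of_rightBranching (hW : Even W.length) (h : RightBranching T W) :
    NodeString₂ (evens T) (odds T) (evens W) := by
  obtain ⟨c, d, hcd, hc, hd⟩ := h
  have hc' := evens_infix_or_of_infix hc
  have hd' := evens_infix_or_of_infix hd
  rw [evens_append_of_even hW] at hc' hd'
  exact .inr (.inr (.inr ⟨c, d, hcd, hc', hd'⟩))

theorem nodeString₂_odds_of_rightBranching (hW : ¬Even W.length) (h : RightBranching T W) :
    NodeString₂ (evens T) (odds T) (odds W) := by
  obtain ⟨c, d, hcd, hc, hd⟩ := h
  have hc' := odds_infix_or_of_infix hc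
  have hd' := odds_infix_or_of_infix hd
  rw [odds_append_of_not_even hW] at hc' hd'
  exact .inr (.inr (.inr ⟨c, d, hcd, hc', hd'⟩))

theorem exists_nodeString₂_interleave₂_eq_of_rightBranching (hW : W <:+: T)
    (hbr : RightBranching T W) :
    ∃ W₁ W₂ : List σ, NodeString₂ (evens T) (odds T) W₁ ∧
      NodeString₂ (evens T) (odds T) W₂ ∧ interleave₂ W₁ W₂ = W := by
  obtain ⟨A, B, rfl⟩ := hW
  have hWB : W ++ B <:+ A ++ W ++ B := by simp
  by_cases hpar : Even W.length
  · refine ⟨evens W, odds (W ++ B), nodeString₂_evens_of_rightBranching hpar hbr,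
      nodeString₂_of_suffix (odds_suffix_or_of_suffix hWB), ?_⟩
    rw [odds_append_of_even hpar, interleave₂_evens_odds_append_of_even hpar]
  · refine ⟨evens (W ++ B), odds W, nodeString₂_of_suffix (evens_suffix_or_of_suffix hWB),
      nodeString₂_odds_of_rightBranching hpar hbr, ?_⟩
    rw [evens_append_of_not_even hpar, interleave₂_evens_append_odds_of_not_even hpar]

theorem exists_nodeString₂_interleave₂_eq (hW : NodeString T W) :
    ∃ W₁ W₂ : List σ, NodeString₂ (evens T) (odds T) W₁ ∧
      NodeString₂ (evens T) (odds T) W₂ ∧ interleave₂ W₁ W₂ = W := by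
  rcases hW with rfl | hsuf | ⟨hinf, hbr⟩
  · exact ⟨[], [], .inl rfl, .inl rfl, rfl⟩
  · exact ⟨evens W, odds W, nodeString₂_of_suffix (evens_suffix_or_of_suffix hsuf),
      nodeString₂_of_suffix (odds_suffix_or_of_suffix hsuf), interleave₂_evens_odds W⟩
  · exact exists_nodeString₂_interleave₂_eq_of_rightBranching hinf hbr

end

/-- paper's Lemma 4 for k = 2: let `T` end in two distinct delimiter
characters `c₁ ≠ c₂`, each occurring exactly once in `T`, and let `T₁ = evens T`,
`T₂ = odds T` be its 2-interleaved subsequences.  Then for every node-string `W` of `T`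
there exist node-strings `W₁`, `W₂` of the pair `(T₁, T₂)` such that
`W′ = interleave₂ W₁ W₂` is a prefix of `W` and every node-string `V` of `T` that is a
proper prefix of `W` satisfies `|V| < |W′|` (i.e. `W′` is one of the substrings which
the node `ω` corresponds to). -/
theorem interleaved_suffix_tree_node_mapping {σ : Type*} [DecidableEq σ]
    (T T' : List σ) (c₁ c₂ : σ) (hT : T = T' ++ [c₁, c₂]) (hne : c₁ ≠ c₂)
    (h₁ : T.count c₁ = 1) (h₂ : T.count c₂ = 1)
    (W : List σ) (hW : NodeString T W) :
    ∃ W₁ W₂ : List σ,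
      NodeString₂ (evens T) (odds T) W₁ ∧
      NodeString₂ (evens T) (odds T) W₂ ∧
      interleave₂ W₁ W₂ <+: W ∧
      ∀ V : List σ, NodeString T V → V <+: W → V ≠ W →
        V.length < (interleave₂ W₁ W₂).length := by
  obtain ⟨W₁, W₂, hW₁, hW₂, hWW⟩ := exists_nodeString₂_interleave₂_eq hW
  refine ⟨W₁, W₂, hW₁, hW₂, hWW ▸ prefix_refl W, fun V _ hVW hVne => ?_⟩
  rw [hWW]
  exact lt_of_not_ge fun hle => hVne (hVW.eq_of_length_le hle)
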